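/- The solution u_h of the semidiscrete Galerkin scheme satisfies ‖u_h(t)‖² + ‖∇u_h(t)‖² = ‖u_{0,h}‖² + ‖∇u_{0,h}‖² for all t ∈ (0,T], i.e., the discrete H¹ norm is conserved. -/

import Mathlib

open MeasureTheory intervalIntegral Set

lemma hasDerivAt_intervalIntegral_param (a b : ℝ) (g g' : ℝ × ℝ → ℝ)
    (hg : Continuous g) (hg' : Continuous g')
    (hd : ∀ t x : ℝ, HasDerivAt (fun s => g (s, x)) (g' (t, x)) t) (t₀ : ℝ) :
    HasDerivAt (fun t => ∫ x in a..b, g (t, x))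
      (∫ x in a..b, g' (t₀, x)) t₀ := by
  have hK : IsCompact (Icc (t₀ - 1) (t₀ + 1) ×ˢ uIcc a b) :=
    (isCompact_Icc).prod isCompact_uIcc
  obtain ⟨C, hC⟩ := hK.exists_bound_of_continuousOn hg'.continuousOn
  refine (intervalIntegral.hasDerivAt_integral_of_dominated_loc_of_deriv_le
    (F := fun t x => g (t, x)) (F' := fun t x => g' (t, x)) (bound := fun _ => C)
    (s := Metric.ball t₀ 1) (Metric.ball_mem_nhds t₀ one_pos) ?_ ?_ ?_ ?_ ?_ ?_).2
  · filter_upwards with s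
    exact (hg.comp (continuous_const.prodMk continuous_id)).aestronglyMeasurable
  · exact (hg.comp (continuous_const.prodMk continuous_id)).intervalIntegrable a b
  · exact (hg'.comp (continuous_const.prodMk continuous_id)).aestronglyMeasurable
  · filter_upwards with x hx
    intro s hs
    have hs' : s ∈ Icc (t₀ - 1) (t₀ + 1) := by
      have := Metric.mem_ball.1 hs
      rw [Real.dist_eq] at this
      constructor <;> [linarith [abs_lt.1 this |>.1]; linarith [abs_lt.1 this |>.2]]
    exact hC (s, x) ⟨hs', uIoc_subset_uIcc hx⟩
  · exact intervalIntegrable_const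
  · filter_upwards with x _
    intro s _
    exact hd s x

set_option maxHeartbeats 1000000 in
/-- The semidiscrete Galerkin solution of the GRLW equation conserves the
discrete H¹ norm: `‖u_h(t)‖² + ‖∇u_h(t)‖² = ‖u_{0,h}‖² + ‖∇u_{0,h}‖²` on `(0,T]`. -/
theorem grlw_semidiscrete_H1_conservation
    (a b T : ℝ) (hab : a < b) (hT : 0 < T) (p : ℕ) (hp : 0 < p)
    (F : ℝ → ℝ) (hF : ∀ v : ℝ, F v = -v * (1 + p * v ^ p))
    (Sh : Set (ℝ → ℝ)) (uh : ℝ → ℝ → ℝ)  -- uh t x, with uh t ∈ Sh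
    (hmem : ∀ t ∈ Icc (0:ℝ) T, uh t ∈ Sh)
    (hsmooth : ContDiff ℝ (⊤ : ℕ∞) (fun q : ℝ × ℝ => uh q.1 q.2))
    (hbc : ∀ t : ℝ, uh t a = 0 ∧ uh t b = 0)
    (hscheme : ∀ t ∈ Icc (0:ℝ) T, ∀ ξ ∈ Sh,
      (∫ x in a..b, deriv (fun s => uh s x) t * ξ x)
        + (∫ x in a..b, deriv (fun y => deriv (fun s => uh s y) t) x * deriv ξ x)
        = -(∫ x in a..b, F (uh t x) * deriv ξ x)) :
    ∀ t ∈ Ioc (0:ℝ) T,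
      (∫ x in a..b, (uh t x) ^ 2) + (∫ x in a..b, (deriv (uh t) x) ^ 2)
        = (∫ x in a..b, (uh 0 x) ^ 2) + (∫ x in a..b, (deriv (uh 0) x) ^ 2) := by
  set f : ℝ × ℝ → ℝ := fun q => uh q.1 q.2 with hf_def
  have hfdiff : Differentiable ℝ f := hsmooth.differentiable (by simp)
  -- partial derivatives
  set ut : ℝ × ℝ → ℝ := fun q => fderiv ℝ f q (1, 0) with hut_def
  set ux : ℝ × ℝ → ℝ := fun q => fderiv ℝ f q (0, 1) with hux_def
  have hfderiv_smooth : ContDiff ℝ (⊤ : ℕ∞) (fderiv ℝ f) := by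
    exact (hsmooth.fderiv_right (m := (⊤ : ℕ∞)) (by simp))
  have hut_smooth : ContDiff ℝ (⊤ : ℕ∞) ut := hfderiv_smooth.clm_apply contDiff_const
  have hux_smooth : ContDiff ℝ (⊤ : ℕ∞) ux := hfderiv_smooth.clm_apply contDiff_const
  -- generic partial derivatives as HasDerivAt, for any smooth h
  have hpart1 : ∀ (h : ℝ × ℝ → ℝ), Differentiable ℝ h → ∀ t x : ℝ,
      HasDerivAt (fun s => h (s, x)) (fderiv ℝ h (t, x) (1, 0)) t := by
    intro h hh t x
    have hline : HasDerivAt (fun s : ℝ => (s, x)) ((1:ℝ), (0:ℝ)) t :=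
      (hasDerivAt_id t).prodMk (hasDerivAt_const t x)
    exact (hh (t, x)).hasFDerivAt.comp_hasDerivAt t hline
  have hpart2 : ∀ (h : ℝ × ℝ → ℝ), Differentiable ℝ h → ∀ t x : ℝ,
      HasDerivAt (fun y => h (t, y)) (fderiv ℝ h (t, x) (0, 1)) x := by
    intro h hh t x
    have hline : HasDerivAt (fun y : ℝ => (t, y)) ((0:ℝ), (1:ℝ)) x :=
      (hasDerivAt_const x t).prodMk (hasDerivAt_id x)
    exact (hh (t, x)).hasFDerivAt.comp_hasDerivAt x hline
  have h_ut : ∀ t x : ℝ, HasDerivAt (fun s => uh s x) (ut (t, x)) t :=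
    fun t x => hpart1 f hfdiff t x
  have h_ux : ∀ t x : ℝ, HasDerivAt (uh t) (ux (t, x)) x :=
    fun t x => hpart2 f hfdiff t x
  have hut_d : ∀ t x : ℝ, deriv (fun s => uh s x) t = ut (t, x) :=
    fun t x => (h_ut t x).deriv
  have hux_d : ∀ t x : ℝ, deriv (uh t) x = ux (t, x) :=
    fun t x => (h_ux t x).deriv
  -- symmetry of second derivatives: ∂x(ut) = ∂t(ux)
  have hswap : ∀ q : ℝ × ℝ, fderiv ℝ ut q (0, 1) = fderiv ℝ ux q (1, 0) := by
    intro q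
    have hf' : ∀ y, HasFDerivAt f (fderiv ℝ f y) y := fun y => (hfdiff y).hasFDerivAt
    have hf'' : HasFDerivAt (fderiv ℝ f) (fderiv ℝ (fderiv ℝ f) q) q :=
      ((hfderiv_smooth.differentiable (by simp)) q).hasFDerivAt
    have key : ∀ v w : ℝ × ℝ, fderiv ℝ (fun r => fderiv ℝ f r v) q w
        = fderiv ℝ (fderiv ℝ f) q w v := by
      intro v w
      rw [fderiv_clm_apply (hfderiv_smooth.differentiable (by simp) q)
        (differentiableAt_const v)]
      simp
    rw [hut_def, hux_def, key, key]
    exact second_derivative_symmetric hf' hf'' _ _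
  set utx : ℝ × ℝ → ℝ := fun q => fderiv ℝ ux q (1, 0) with hutx_def
  have hutx_smooth : ContDiff ℝ (⊤ : ℕ∞) utx :=
    (hux_smooth.fderiv_right (m := (⊤ : ℕ∞)) (by simp)).clm_apply contDiff_const
  have hmix : ∀ t x : ℝ, deriv (fun y => deriv (fun s => uh s y) t) x = utx (t, x) := by
    intro t x
    have e : (fun y => deriv (fun s => uh s y) t) = fun y => ut (t, y) :=
      funext fun y => hut_d t y
    rw [e, (hpart2 ut (hut_smooth.differentiable (by simp)) t x).deriv]
    exact hswap (t, x)
  -- continuity of everything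
  have huh_cont : ∀ t : ℝ, Continuous (uh t) := fun t =>
    hsmooth.continuous.comp (continuous_const.prodMk continuous_id)
  -- the FTC fact : ∫ F(u) u_x = 0
  have hFzero : ∀ s : ℝ, (∫ x in a..b, F (uh s x) * ux (s, x)) = 0 := by
    intro s
    set G : ℝ → ℝ := fun v => -(1/2) * v ^ 2 - (p : ℝ)/((p : ℝ)+2) * v ^ (p+2) with hG_def
    have hG : ∀ v : ℝ, HasDerivAt G (F v) v := by
      intro v
      have h1 : HasDerivAt (fun v : ℝ => -(1/2) * v ^ 2)
          (-(1/2) * ((2:ℕ) * v ^ (2-1))) v := (hasDerivAt_pow 2 v).const_mul _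
      have h2 : HasDerivAt (fun v : ℝ => (p : ℝ)/((p : ℝ)+2) * v ^ (p+2))
          ((p : ℝ)/((p : ℝ)+2) * ((p+2 : ℕ) * v ^ (p+2-1))) v :=
        (hasDerivAt_pow (p+2) v).const_mul _
      have := h1.sub h2
      refine this.congr_deriv (Eq.symm ?_)
      rw [hF]
      have hp2 : ((p : ℝ)+2) ≠ 0 := by positivity
      push_cast
      field_simp
      ring
    have hder : ∀ x ∈ uIcc a b,
        HasDerivAt (fun y => G (uh s y)) (F (uh s x) * ux (s, x)) x := by
      intro x _
      exact (hG (uh s x)).comp x (h_ux s x)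
    have hcont : Continuous (fun x => F (uh s x) * ux (s, x)) := by
      have e : (fun x => F (uh s x)) = fun x => -(uh s x) * (1 + (p:ℝ) * (uh s x) ^ p) :=
        funext fun x => hF _
      refine Continuous.mul ?_ ?_
      · rw [e]
        exact ((huh_cont s).neg).mul (continuous_const.add
          (continuous_const.mul ((huh_cont s).pow p)))
      · exact hux_smooth.continuous.comp (continuous_const.prodMk continuous_id)
    rw [intervalIntegral.integral_eq_sub_of_hasDerivAt hder (hcont.intervalIntegrable a b)]
    rw [(hbc s).1, (hbc s).2]
    simp
  -- the energy
  set g : ℝ × ℝ → ℝ := fun q => f q ^ 2 + ux q ^ 2 with hg_def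
  set g' : ℝ × ℝ → ℝ := fun q => 2 * f q * ut q + 2 * ux q * utx q with hg'_def
  set E : ℝ → ℝ := fun t => ∫ x in a..b, g (t, x) with hE_def
  have hg_cont : Continuous g := by
    exact (hsmooth.continuous.pow 2).add (hux_smooth.continuous.pow 2)
  have hg'_cont : Continuous g' := by
    exact ((continuous_const.mul hsmooth.continuous).mul hut_smooth.continuous).add
      ((continuous_const.mul hux_smooth.continuous).mul hutx_smooth.continuous)
  have hgd : ∀ t x : ℝ, HasDerivAt (fun s => g (s, x)) (g' (t, x)) t := by
    intro t x
    have h1 := (h_ut t x).pow 2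
    have h2 := (hpart1 ux (hux_smooth.differentiable (by simp)) t x).pow 2
    have := h1.add h2
    refine this.congr_deriv (Eq.symm ?_)
    simp only [hg'_def, hf_def]
    ring
  have hE_deriv : ∀ t : ℝ, HasDerivAt E (∫ x in a..b, g' (t, x)) t := fun t =>
    hasDerivAt_intervalIntegral_param a b g g' hg_cont hg'_cont hgd t
  -- E' = 0 on [0,T]
  have hE0 : ∀ s ∈ Icc (0:ℝ) T, HasDerivAt E 0 s := by
    intro s hs
    have hmix' : ∀ t x : ℝ, deriv (fun y => ut (t, y)) x = utx (t, x) := by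
      intro t x
      rw [(hpart2 ut (hut_smooth.differentiable (by simp)) t x).deriv]
      exact hswap (t, x)
    have hsch := hscheme s hs (uh s) (hmem s hs)
    simp only [hut_d, hmix', hux_d] at hsch
    have hD : (∫ x in a..b, g' (s, x)) = 0 := by
      have hi1 : IntervalIntegrable (fun x => ut (s, x) * uh s x) volume a b :=
        ((hut_smooth.continuous.comp (continuous_const.prodMk continuous_id)).mul
          (huh_cont s)).intervalIntegrable a b
      have hi2 : IntervalIntegrable (fun x => utx (s, x) * ux (s, x)) volume a b :=
        ((hutx_smooth.continuous.comp (continuous_const.prodMk continuous_id)).mul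
          (hux_smooth.continuous.comp (continuous_const.prodMk continuous_id))).intervalIntegrable a b
      have e : (fun x => g' (s, x)) = fun x =>
          2 * (ut (s, x) * uh s x) + 2 * (utx (s, x) * ux (s, x)) := by
        funext x
        simp [hg'_def, hf_def]
        ring
      rw [e, intervalIntegral.integral_add ((hi1.const_mul 2)) ((hi2.const_mul 2)),
        intervalIntegral.integral_const_mul, intervalIntegral.integral_const_mul]
      rw [hFzero s] at hsch
      simp only [neg_zero] at hsch
      linarith
    rw [← hD]
    exact hE_deriv s
  intro t ht
  have htT : Icc (0:ℝ) t ⊆ Icc (0:ℝ) T := Icc_subset_Icc le_rfl ht.2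
  have huIcc : uIcc (0:ℝ) t = Icc 0 t := uIcc_of_le ht.1.le
  have hEt : E t = E 0 := by
    have := intervalIntegral.integral_eq_sub_of_hasDerivAt (f := E)
      (f' := fun _ => (0:ℝ)) (a := 0) (b := t)
      (fun s hs => hE0 s (htT (huIcc ▸ hs))) intervalIntegrable_const
    simp at this
    linarith
  -- unpack E
  have hsplit : ∀ s : ℝ, E s = (∫ x in a..b, (uh s x) ^ 2) + (∫ x in a..b, ux (s, x) ^ 2) := by
    intro s
    rw [hE_def]
    exact intervalIntegral.integral_add
      (((huh_cont s).pow 2).intervalIntegrable a b)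
      (((hux_smooth.continuous.comp (continuous_const.prodMk continuous_id)).pow 2).intervalIntegrable a b)
  simp only [hux_d]
  rw [← hsplit t, ← hsplit 0, hEt]
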